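/- Let R be a field, G a group, J a subgroup of G, and λ an R[J]-module. Then there is an R-linear isomorphism Hom_{R[G]}(ind_J^G λ, Coind_J^G λ) ≅ ∏_{JgJ ∈ J\G/J} Hom_{R[J ∩ gJg⁻¹]}(ᵍλ, λ|_{J ∩ gJg⁻¹}), the product being taken over a set of representatives g of the double cosets JgJ of J in G. -/

import Mathlib

set_option synthInstance.maxHeartbeats 1000000
set_option maxHeartbeats 1000000

open Function

variable {R : Type*} [Field R] {G : Type*} [Group G]
variable {V : Type*} [AddCommGroup V] [Module R V]


/-- The induced module `ind_J^G λ`, modelled as the space of functions `f : G → V`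
with `f (g * j) = σ j⁻¹ (f g)` supported on finitely many left cosets of `J`
(this is the usual model of `R[G] ⊗_{R[J]} V`, with `g ⊗ v` corresponding to the function
supported on `gJ` sending `g * j` to `σ j⁻¹ v`). -/
def indCarrier (J : Subgroup G) (σ : Representation R J V) : Submodule R (G → V) where
  carrier := {f | (∀ (g : G) (j : J), f (g * (j : G)) = σ j⁻¹ (f g)) ∧
      ((QuotientGroup.mk : G → G ⧸ J) '' Function.support f).Finite}
  add_mem' := by
    rintro f g ⟨hf1, hf2⟩ ⟨hg1, hg2⟩
    refine ⟨fun x j => by simp [hf1, hg1], ?_⟩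
    refine (hf2.union hg2).subset ?_
    rw [← Set.image_union]
    exact Set.image_mono (Function.support_add _ _)
  zero_mem' := ⟨fun g j => by simp, by simp⟩
  smul_mem' := by
    rintro c f ⟨hf1, hf2⟩
    refine ⟨fun g j => by simp [hf1], ?_⟩
    exact hf2.subset (Set.image_mono (Function.support_const_smul_subset c f))

/-- The representation of `G` on the induced module `ind_J^G λ`, by left translation:
`(x • f) (g) = f (x⁻¹ * g)`. -/
def indRep (J : Subgroup G) (σ : Representation R J V) :
    Representation R G (indCarrier J σ) where
  toFun x :=
    { toFun := fun f => ⟨fun g => (f : G → V) (x⁻¹ * g), by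
        refine ⟨fun g j => ?_, ?_⟩
        · show (f : G → V) (x⁻¹ * (g * (j : G))) = σ j⁻¹ ((f : G → V) (x⁻¹ * g))
          rw [← mul_assoc]
          exact f.2.1 _ j
        refine ((f.2.2).image (fun c : G ⧸ J => x • c)).subset ?_
        rintro c ⟨g, hg, rfl⟩
        refine ⟨QuotientGroup.mk (x⁻¹ * g), ⟨x⁻¹ * g, hg, rfl⟩, ?_⟩
        show x • (QuotientGroup.mk (x⁻¹ * g) : G ⧸ J) = QuotientGroup.mk g
        rw [MulAction.Quotient.smul_mk, smul_eq_mul, mul_inv_cancel_left]⟩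
      map_add' := fun f g => Subtype.ext (funext fun g' => rfl)
      map_smul' := fun c f => Subtype.ext (funext fun g' => rfl) }
  map_one' := by
    apply LinearMap.ext; intro f
    exact Subtype.ext (funext fun g => by simp)
  map_mul' := fun x y => by
    apply LinearMap.ext; intro f
    exact Subtype.ext (funext fun g => by simp [mul_assoc])


/-- The coinduced module `Coind_J^G λ = Hom_{R[J]}(R[G], λ)`, modelled as the space of all
functions `f : G → V` with `f (j * g) = σ j (f g)`. -/
def coindCarrier (J : Subgroup G) (σ : Representation R J V) : Submodule R (G → V) where
  carrier := {f | ∀ (j : J) (g : G), f ((j : G) * g) = σ j (f g)}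
  add_mem' := fun hf hg j x => by simp [hf j x, hg j x]
  zero_mem' := fun j x => by simp
  smul_mem' := fun c f hf j x => by simp [hf j x]

/-- The representation of `G` on `Coind_J^G λ`, by right translation:
`(x • f) (g) = f (g * x)`. -/
def coindRep (J : Subgroup G) (σ : Representation R J V) :
    Representation R G (coindCarrier J σ) where
  toFun x :=
    { toFun := fun f => ⟨fun g => (f : G → V) (g * x), fun j g => by
        show (f : G → V) ((j : G) * g * x) = σ j ((f : G → V) (g * x))
        rw [mul_assoc]
        exact f.2 j (g * x)⟩
      map_add' := fun f g => Subtype.ext (funext fun g' => rfl)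
      map_smul' := fun c f => Subtype.ext (funext fun g' => rfl) }
  map_one' := by
    apply LinearMap.ext; intro f
    exact Subtype.ext (funext fun g => by simp)
  map_mul' := fun x y => by
    apply LinearMap.ext; intro f
    exact Subtype.ext (funext fun g => by simp [mul_assoc])

/-- The space `Hom_{R[G]}(ind_J^G λ, Coind_J^G λ)` of `G`-equivariant linear maps. -/
def HomIndCoind (J : Subgroup G) (σ : Representation R J V) :
    Submodule R ((indCarrier J σ) →ₗ[R] (coindCarrier J σ)) where
  carrier := {Φ | ∀ (x : G) (f : indCarrier J σ),
    Φ (indRep J σ x f) = coindRep J σ x (Φ f)}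
  add_mem' := fun hΦ hΨ x f => by simp [hΦ x f, hΨ x f]
  zero_mem' := fun x f => by simp
  smul_mem' := fun c Φ hΦ x f => by simp [hΦ x f]

/-- The intertwining space `Hom_{R[J ∩ gJg⁻¹]}(ᵍλ, λ|_{J ∩ gJg⁻¹})`, where `x ∈ J ∩ gJg⁻¹`
acts on `ᵍλ` (same underlying space as `λ`) by `σ (g⁻¹ x g)`. -/
def Intertwiner (J : Subgroup G) (σ : Representation R J V) (g : G) :
    Submodule R (V →ₗ[R] V) where
  carrier := {f | ∀ (x : G) (hx : x ∈ J) (hx' : g⁻¹ * x * g ∈ J) (v : V),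
    f (σ ⟨g⁻¹ * x * g, hx'⟩ v) = σ ⟨x, hx⟩ (f v)}
  add_mem' := fun hf hf' x hx hx' v => by simp [hf x hx hx' v, hf' x hx hx' v]
  zero_mem' := fun x hx hx' v => by simp
  smul_mem' := fun c f hf x hx hx' v => by simp [hf x hx hx' v]


/-!
A `G`-map `Φ : ind λ → Coind λ` is determined by its values on the vectors `1 ⊗ v`, and reading
these off gives a kernel `K g v = Φ (1 ⊗ v) g` with `K (a g b) = σ a ∘ K g ∘ σ b` for `a b ∈ J`;
conversely every such kernel defines the `G`-map `f ↦ (g ↦ ∑_{c ∈ G/J} K (g c) (f c))`.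
A bi-equivariant kernel is determined by its values at representatives of the double cosets, and
`K g` is exactly an intertwiner `ᵍλ → λ` of `J ∩ gJg⁻¹`. Conversely a family of intertwiners
extends to a kernel, because two decompositions `a g b = a' g b'` differ by the element
`a'⁻¹ a ∈ J ∩ gJg⁻¹`.
-/
section Cosets

variable {M : Type*} {J : Subgroup G} {t : G → M}

lemma apply_out_mk_of_mul_right (ht : ∀ (y : G) (j : J), t (y * j) = t y) (y : G) :
    t (y : G ⧸ J).out = t y := by
  obtain ⟨j, hj⟩ := QuotientGroup.mk_out_eq_mul J y
  rw [hj, ht]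

lemma finsum_out_mul_left [AddCommMonoid M] (ht : ∀ (y : G) (j : J), t (y * j) = t y) (x : G) :
    ∑ᶠ c : G ⧸ J, t (x * c.out) = ∑ᶠ c : G ⧸ J, t c.out := by
  have hsmul : ∀ c : G ⧸ J, t (x * c.out) = t (MulAction.toPerm x c).out := fun c => by
    rw [← apply_out_mk_of_mul_right ht, MulAction.toPerm_apply]
    conv_rhs => rw [← QuotientGroup.out_eq' c, MulAction.Quotient.smul_mk, smul_eq_mul]
  simp only [hsmul]
  exact finsum_comp_equiv (MulAction.toPerm x) (f := fun c : G ⧸ J => t c.out)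

end Cosets

section Induced

variable (J : Subgroup G) (σ : Representation R J V)

lemma indRep_apply (x : G) (f : indCarrier J σ) (g : G) :
    (indRep J σ x f : G → V) g = (f : G → V) (x⁻¹ * g) := rfl

lemma coindRep_apply (x : G) (f : coindCarrier J σ) (g : G) :
    (coindRep J σ x f : G → V) g = (f : G → V) (g * x) := rfl

-- The element `1 ⊗ v` of `R[G] ⊗_{R[J]} V` in the function model `indCarrier`.
open scoped Classical in
noncomputable def indSingle : V →ₗ[R] indCarrier J σ where
  toFun v := ⟨fun g => if h : g ∈ J then σ ⟨g, h⟩⁻¹ v else 0, by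
    refine ⟨fun g j => ?_, (Set.finite_singleton ((1 : G) : G ⧸ J)).subset ?_⟩
    · dsimp only
      by_cases hg : g ∈ J
      · rw [dif_pos hg, dif_pos (J.mul_mem hg j.2), ← Module.End.mul_apply, ← map_mul]
        congr
        ext
        simp
      · have hgj : g * j ∉ J := fun h => hg (by simpa using J.mul_mem h (J.inv_mem j.2))
        rw [dif_neg hg, dif_neg hgj, map_zero]
    · rintro _ ⟨g, hg, rfl⟩
      have hgJ : g ∈ J := by
        by_contra h
        exact hg (dif_neg h)
      exact QuotientGroup.eq.mpr (by simpa using J.inv_mem hgJ)⟩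
  map_add' v w := Subtype.ext <| funext fun g => by
    by_cases h : g ∈ J <;> simp [h]
  map_smul' c v := Subtype.ext <| funext fun g => by
    by_cases h : g ∈ J <;> simp [h]

variable {J σ}

lemma indSingle_apply_coe (v : V) (j : J) : (indSingle J σ v : G → V) j = σ j⁻¹ v :=
  dif_pos j.2

lemma indSingle_apply_of_notMem (v : V) {g : G} (hg : g ∉ J) : (indSingle J σ v : G → V) g = 0 :=
  dif_neg hg

lemma indRep_indSingle (j : J) (v : V) :
    indRep J σ j (indSingle J σ v) = indSingle J σ (σ j v) := by
  refine Subtype.ext <| funext fun g => ?_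
  rw [indRep_apply]
  by_cases hg : g ∈ J
  · lift g to J using hg
    rw [← Subgroup.coe_inv, ← Subgroup.coe_mul, indSingle_apply_coe, indSingle_apply_coe,
      ← Module.End.mul_apply, ← map_mul, mul_inv_rev, inv_inv]
  · have hjg : (j : G)⁻¹ * g ∉ J := fun h => hg (by simpa using J.mul_mem j.2 h)
    rw [indSingle_apply_of_notMem _ hg, indSingle_apply_of_notMem _ hjg]

open scoped Classical in
lemma indRep_out_indSingle_apply (f : indCarrier J σ) (c : G ⧸ J) (g : G) :
    (indRep J σ c.out (indSingle J σ ((f : G → V) c.out)) : G → V) g =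
      if (g : G ⧸ J) = c then (f : G → V) g else 0 := by
  rw [indRep_apply]
  split_ifs with hgc
  · have hj : c.out⁻¹ * g ∈ J := QuotientGroup.eq.mp (by rw [QuotientGroup.out_eq', hgc])
    rw [show c.out⁻¹ * g = ((⟨_, hj⟩ : J) : G) from rfl, indSingle_apply_coe, ← f.2.1 c.out,
      mul_inv_cancel_left]
  · refine indSingle_apply_of_notMem _ fun hj => hgc ?_
    rw [← QuotientGroup.out_eq' c]
    exact (QuotientGroup.eq.mpr hj).symm

lemma eq_sum_indRep_indSingle (f : indCarrier J σ) {s : Finset (G ⧸ J)}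
    (hs : ∀ g, (f : G → V) g ≠ 0 → (g : G ⧸ J) ∈ s) :
    f = ∑ c ∈ s, indRep J σ c.out (indSingle J σ ((f : G → V) c.out)) := by
  refine Subtype.ext <| funext fun g => ?_
  rw [Submodule.coe_sum, Finset.sum_apply]
  simp only [indRep_out_indSingle_apply, Finset.sum_ite_eq]
  split_ifs with hg
  · rfl
  · exact not_not.mp (mt (hs g) hg)

lemma linearMap_ext_indSingle {M : Type*} [AddCommMonoid M] [Module R M]
    (ρ : Representation R G M) {Φ Φ' : indCarrier J σ →ₗ[R] M}
    (hΦ : ∀ x f, Φ (indRep J σ x f) = ρ x (Φ f)) (hΦ' : ∀ x f, Φ' (indRep J σ x f) = ρ x (Φ' f))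
    (h : ∀ v, Φ (indSingle J σ v) = Φ' (indSingle J σ v)) : Φ = Φ' := by
  ext f
  have hs : ∀ g, (f : G → V) g ≠ 0 → (g : G ⧸ J) ∈ f.2.2.toFinset :=
    fun g hg => f.2.2.mem_toFinset.mpr ⟨g, hg, rfl⟩
  rw [eq_sum_indRep_indSingle f hs, map_sum, map_sum]
  simp only [hΦ, hΦ', h]

end Induced

section Kernels

variable (J : Subgroup G) (σ : Representation R J V)

def Biequivariant : Submodule R (G → V →ₗ[R] V) where
  carrier := {K | ∀ (a : J) (g : G) (b : J) (v : V), K (a * g * b) v = σ a (K g (σ b v))}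
  add_mem' hK hK' a g b v := by simp [hK a g b v, hK' a g b v]
  zero_mem' a g b v := by simp
  smul_mem' c K hK a g b v := by simp [hK a g b v]

variable {J σ}

namespace Biequivariant

variable {K : G → V →ₗ[R] V} (hK : K ∈ Biequivariant J σ)
include hK

lemma apply_mul_left (a : J) (g : G) (v : V) : K (a * g) v = σ a (K g v) := by
  simpa using hK a g 1 v

lemma apply_mul_right (g : G) (b : J) (v : V) : K (g * b) v = K g (σ b v) := by
  simpa using hK 1 g b v

end Biequivariant

noncomputable def toKernel (Φ : indCarrier J σ →ₗ[R] coindCarrier J σ) (g : G) : V →ₗ[R] V :=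
  LinearMap.proj g ∘ₗ (coindCarrier J σ).subtype ∘ₗ Φ ∘ₗ indSingle J σ

lemma toKernel_apply (Φ : indCarrier J σ →ₗ[R] coindCarrier J σ) (g : G) (v : V) :
    toKernel Φ g v = (Φ (indSingle J σ v) : G → V) g := rfl

lemma toKernel_mem {Φ : indCarrier J σ →ₗ[R] coindCarrier J σ} (hΦ : Φ ∈ HomIndCoind J σ) :
    toKernel Φ ∈ Biequivariant J σ := by
  intro a g b v
  rw [toKernel_apply, toKernel_apply, mul_assoc, (Φ (indSingle J σ v)).2 a, ← coindRep_apply,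
    ← hΦ, indRep_indSingle]

def kernelSummand (K : G → V →ₗ[R] V) (f : indCarrier J σ) (g y : G) : V :=
  K (g * y) ((f : G → V) y)

lemma kernelSummand_mul_right {K : G → V →ₗ[R] V} (hK : K ∈ Biequivariant J σ)
    (f : indCarrier J σ) (g y : G) (j : J) :
    kernelSummand K f g (y * j) = kernelSummand K f g y := by
  rw [kernelSummand, f.2.1, ← mul_assoc, Biequivariant.apply_mul_right hK,
    Representation.self_inv_apply, kernelSummand]

lemma finite_support_kernelSummand (K : G → V →ₗ[R] V) (f : indCarrier J σ) (g : G) :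
    (support fun c : G ⧸ J => kernelSummand K f g c.out).Finite :=
  f.2.2.subset fun c hc =>
    ⟨c.out, fun h0 => hc (by simp only [kernelSummand, h0, map_zero]), QuotientGroup.out_eq' c⟩

noncomputable def ofKernel (K : Biequivariant J σ) : indCarrier J σ →ₗ[R] coindCarrier J σ where
  toFun f := ⟨fun g => ∑ᶠ c : G ⧸ J, kernelSummand K f g c.out, fun j g => by
    simp only [kernelSummand, mul_assoc, Biequivariant.apply_mul_left K.2]
    exact (map_finsum (σ j) (finite_support_kernelSummand _ f g)).symm⟩
  map_add' f f' := Subtype.ext <| funext fun g => by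
    simp only [kernelSummand, Submodule.coe_add, Pi.add_apply, map_add]
    exact finsum_add_distrib (finite_support_kernelSummand _ f g)
      (finite_support_kernelSummand _ f' g)
  map_smul' r f := Subtype.ext <| funext fun g => by
    simp only [kernelSummand, Submodule.coe_smul, Pi.smul_apply, map_smul, RingHom.id_apply]
    exact (smul_finsum r _).symm

lemma ofKernel_apply (K : Biequivariant J σ) (f : indCarrier J σ) (g : G) :
    (ofKernel K f : G → V) g = ∑ᶠ c : G ⧸ J, kernelSummand K f g c.out :=
  rfl

lemma ofKernel_mem (K : Biequivariant J σ) : ofKernel K ∈ HomIndCoind J σ := by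
  intro x f
  refine Subtype.ext <| funext fun g => ?_
  rw [coindRep_apply, ofKernel_apply, ofKernel_apply]
  have := finsum_out_mul_left (kernelSummand_mul_right K.2 f (g * x)) x⁻¹
  simpa only [kernelSummand, indRep_apply, mul_assoc, mul_inv_cancel_left] using this

lemma ofKernel_indSingle (K : Biequivariant J σ) (v : V) (g : G) :
    (ofKernel K (indSingle J σ v) : G → V) g = (K : G → V →ₗ[R] V) g v := by
  rw [ofKernel_apply, finsum_eq_single _ ((1 : G) : G ⧸ J)]
  · rw [apply_out_mk_of_mul_right (kernelSummand_mul_right K.2 _ g), kernelSummand, mul_one,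
      ← OneMemClass.coe_one J, indSingle_apply_coe, inv_one, map_one, Module.End.one_apply]
  · intro c hc
    have hc' : c.out ∉ J := fun h => hc <| by
      rw [← QuotientGroup.out_eq' c]
      exact QuotientGroup.eq.mpr (by simpa using h)
    rw [kernelSummand, indSingle_apply_of_notMem v hc', map_zero]

variable (J σ) in
noncomputable def homIndCoindEquivBiequivariant : HomIndCoind J σ ≃ₗ[R] Biequivariant J σ where
  toFun Φ := ⟨toKernel Φ.1, toKernel_mem Φ.2⟩
  map_add' _ _ := rfl
  map_smul' _ _ := rfl
  invFun K := ⟨ofKernel K, ofKernel_mem K⟩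
  left_inv Φ := Subtype.ext <| linearMap_ext_indSingle (coindRep J σ) (ofKernel_mem _) Φ.2
    fun v => Subtype.ext <| funext fun g => ofKernel_indSingle _ v g
  right_inv K := Subtype.ext <| funext fun g => LinearMap.ext fun v => ofKernel_indSingle K v g

end Kernels

section DoubleCosets

variable {J : Subgroup G} {σ : Representation R J V}

lemma Biequivariant.mem_intertwiner {K : G → V →ₗ[R] V} (hK : K ∈ Biequivariant J σ) (g : G) :
    K g ∈ Intertwiner J σ g := by
  intro x hx hx' v
  rw [← apply_mul_right hK, ← apply_mul_left hK ⟨x, hx⟩]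
  congr 1
  group

lemma Intertwiner.apply_eq_of_mul_eq {g : G} {ψ : V →ₗ[R] V} (hψ : ψ ∈ Intertwiner J σ g)
    {a b a' b' : J} (h : (a : G) * g * b = a' * g * b') (v : V) :
    σ a (ψ (σ b v)) = σ a' (ψ (σ b' v)) := by
  have hconj : g⁻¹ * (a'⁻¹ * a : J) * g = (b' * b⁻¹ : J) := by
    have key : ∀ x y x' y' : G, x * g * y = x' * g * y' → g⁻¹ * (x'⁻¹ * x) * g = y' * y⁻¹ := by
      intro x y x' y' hxy
      rw [show x = x' * g * y' * y⁻¹ * g⁻¹ by rw [← hxy]; group]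
      group
    exact key _ _ _ _ h
  calc σ a (ψ (σ b v)) = σ a' (σ (a'⁻¹ * a) (ψ (σ b v))) := by
        rw [map_mul, Module.End.mul_apply, Representation.self_inv_apply]
    _ = σ a' (ψ (σ (b' * b⁻¹) (σ b v))) := by
        have hy : (⟨g⁻¹ * (a'⁻¹ * a : J) * g, hconj ▸ (b' * b⁻¹).2⟩ : J) = b' * b⁻¹ :=
          Subtype.ext hconj
        rw [← hy, hψ]
    _ = σ a' (ψ (σ b' v)) := by
        rw [map_mul, Module.End.mul_apply, Representation.inv_self_apply]

lemma DoubleCoset.mk_mul_mul (H K : Subgroup G) (a : H) (b : K) (g : G) :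
    DoubleCoset.mk H K (a * g * b) = DoubleCoset.mk H K g :=
  ((DoubleCoset.eq H K g _).mpr ⟨a, a.2, b, b.2, rfl⟩).symm

lemma DoubleCoset.exists_eq_mul_out_mul (H K : Subgroup G) (g : G) :
    ∃ (a : H) (b : K), g = a * (DoubleCoset.mk H K g).out * b := by
  obtain ⟨a, b, ha, hb, h⟩ := DoubleCoset.mk_out_eq_mul H K g
  refine ⟨⟨a, ha⟩⁻¹, ⟨b, hb⟩⁻¹, ?_⟩
  rw [Subgroup.coe_inv, Subgroup.coe_inv, h]
  group

namespace Intertwiner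

variable (Ψ : ∀ q : DoubleCoset.Quotient (J : Set G) J, Intertwiner J σ q.out)

noncomputable def extend (g : G) : V →ₗ[R] V :=
  σ (DoubleCoset.exists_eq_mul_out_mul J J g).choose ∘ₗ
    (Ψ (DoubleCoset.mk J J g) : V →ₗ[R] V) ∘ₗ
    σ (DoubleCoset.exists_eq_mul_out_mul J J g).choose_spec.choose

lemma extend_mul_out_mul (q : DoubleCoset.Quotient (J : Set G) J) (a b : J) (v : V) :
    extend Ψ (a * q.out * b) v = σ a ((Ψ q : V →ₗ[R] V) (σ b v)) := by
  have key : ∀ g q, DoubleCoset.mk J J g = q → g = a * q.out * b →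
      extend Ψ g v = σ a ((Ψ q : V →ₗ[R] V) (σ b v)) := by
    rintro g q rfl hg
    exact Intertwiner.apply_eq_of_mul_eq (Ψ _).2
      ((DoubleCoset.exists_eq_mul_out_mul J J g).choose_spec.choose_spec.symm.trans hg) v
  exact key _ q (by rw [DoubleCoset.mk_mul_mul, DoubleCoset.out_eq']) rfl

lemma extend_out (q : DoubleCoset.Quotient (J : Set G) J) : extend Ψ q.out = Ψ q :=
  LinearMap.ext fun v => by simpa using extend_mul_out_mul Ψ q 1 1 v

lemma extend_mem : extend Ψ ∈ Biequivariant J σ := by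
  intro a g b v
  obtain ⟨a₀, b₀, hg⟩ := DoubleCoset.exists_eq_mul_out_mul J J g
  set q := DoubleCoset.mk J J g
  have hagb : (a : G) * g * b = (a * a₀ : J) * q.out * (b₀ * b : J) := by
    rw [hg]
    simp only [Subgroup.coe_mul]
    group
  rw [hagb, hg, extend_mul_out_mul, extend_mul_out_mul, map_mul, map_mul, Module.End.mul_apply,
    Module.End.mul_apply]

end Intertwiner

lemma Biequivariant.extend_eq {K : G → V →ₗ[R] V} (hK : K ∈ Biequivariant J σ) :
    Intertwiner.extend (fun q => ⟨K q.out, Biequivariant.mem_intertwiner hK q.out⟩) = K := by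
  funext g
  refine LinearMap.ext fun v => ?_
  obtain ⟨a, b, hg⟩ := DoubleCoset.exists_eq_mul_out_mul J J g
  rw [hg, Intertwiner.extend_mul_out_mul, ← hK]

variable (J σ) in
noncomputable def biequivariantEquivPi :
    Biequivariant J σ ≃ₗ[R] ∀ q : DoubleCoset.Quotient (J : Set G) J, Intertwiner J σ q.out where
  toFun K q := ⟨(K : G → V →ₗ[R] V) q.out, Biequivariant.mem_intertwiner K.2 q.out⟩
  map_add' _ _ := rfl
  map_smul' _ _ := rfl
  invFun Ψ := ⟨Intertwiner.extend Ψ, Intertwiner.extend_mem Ψ⟩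
  left_inv K := Subtype.ext (Biequivariant.extend_eq K.2)
  right_inv Ψ := funext fun q => Subtype.ext (Intertwiner.extend_out Ψ q)

end DoubleCosets

/-- Let `R` be a field, `G` a group, `J` a subgroup of `G` and `λ` an `R[J]`-module (given
as a representation `σ` of `J` on `V`).  There is an `R`-linear isomorphism
`Hom_{R[G]}(ind_J^G λ, Coind_J^G λ) ≅ ∏_{JgJ ∈ J\G/J} Hom_{R[J ∩ gJg⁻¹]}(ᵍλ, λ)`,
the product being over the double cosets of `J` in `G` (with `Quot.out` as set of
representatives). -/
theorem stmt_4 (J : Subgroup G) (σ : Representation R J V) :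
    Nonempty ((HomIndCoind J σ) ≃ₗ[R]
      ((q : DoubleCoset.Quotient (J : Set G) (J : Set G)) → Intertwiner J σ q.out)) :=
  ⟨(homIndCoindEquivBiequivariant J σ).trans (biequivariantEquivPi J σ)⟩
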